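/- Let $r \geq 2$ and let $\Theta_1, \Theta_2$ be endomorphisms of finite-dimensional vector spaces $W_1, W_2$ over a field of characteristic 0 such that $\Theta := \Theta_1\otimes\mathrm{id} + \mathrm{id}\otimes\Theta_2$ on $W_1\otimes W_2$ is diagonalizable. Then $\Theta_1$ and $\Theta_2$ are both diagonalizable (assuming $W_1, W_2 \neq 0$). Moreover, if additionally all eigenvalues of $\Theta$ are integers (in the prime field) and all eigenvalues of $\Theta_2$ are $0$, then all eigenvalues of $\Theta_1$ are integers. -/

import Mathlib

open scoped TensorProduct

/-- An endomorphism is diagonalizable if there is a basis of eigenvectors. -/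
def LinearMap.Diagonalizable {k W : Type*} [Field k] [AddCommGroup W] [Module k W]
    (f : W →ₗ[k] W) : Prop :=
  ∃ (ι : Type) (b : Module.Basis ι k W) (μ : ι → k), ∀ i, f (b i) = μ i • b i

/-!
If `w` is an eigenvector of `Θ₂` with eigenvalue `β`, then `x ↦ x ⊗ w` embeds `W₁` into
`W₁ ⊗ W₂` as a `Θ`-invariant subspace on which `Θ` acts as `Θ₁ + β`. A diagonalizable
endomorphism is semisimple (it is killed by a squarefree polynomial), semisimplicity passes to
invariant subspaces and is unchanged by adding a scalar, and over an algebraically closed field a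
semisimple endomorphism is diagonalizable. So `Θ₁`, and symmetrically `Θ₂`, is diagonalizable;
then the tensor product of eigenbases is an eigenbasis of `Θ` with eigenvalues `α + β`.
-/

open Module Module.End Polynomial

section Diagonalizable

variable {k W : Type*} [Field k] [AddCommGroup W] [Module k W] {f : End k W}

theorem Module.End.exists_eq_of_hasEigenvalue_of_basis {ι : Type*} (b : Basis ι k W) {μ : ι → k}
    (hb : ∀ i, f (b i) = μ i • b i) {ν : k} (hν : f.HasEigenvalue ν) : ∃ i, μ i = ν := by
  by_contra! hne
  have htop : ⨆ c ∈ Set.range μ, f.eigenspace c = ⊤ :=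
    (Submodule.eq_top_iff_forall_basis_mem b).mpr fun i ↦
      le_iSup₂ (f := fun c (_ : c ∈ Set.range μ) ↦ f.eigenspace c) (μ i) ⟨i, rfl⟩
        (mem_eigenspace_iff.mpr (hb i))
  have hdisj := (eigenspaces_iSupIndep f).disjoint_biSup (x := ν) (y := Set.range μ)
    (by rintro ⟨i, hi⟩; exact hne i hi)
  rw [htop, disjoint_top] at hdisj
  exact hν hdisj

theorem LinearMap.diagonalizable_of_iSup_eigenspace_eq_top [FiniteDimensional k W]
    (h : ⨆ μ : k, f.eigenspace μ = ⊤) : f.Diagonalizable := by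
  classical
  have hint : DirectSum.IsInternal fun μ ↦ f.eigenspace μ :=
    DirectSum.isInternal_submodule_of_iSupIndep_of_iSup_eq_top (eigenspaces_iSupIndep f) h
  let B := hint.collectedBasis fun μ ↦ Basis.ofVectorSpace k (f.eigenspace μ)
  have : Fintype (Σ μ, Basis.ofVectorSpaceIndex k (f.eigenspace μ)) :=
    FiniteDimensional.fintypeBasisIndex B
  -- `Diagonalizable` asks for an index type in `Type`, hence the reindexing along `Fin`.
  let e := Fintype.equivFin (Σ μ, Basis.ofVectorSpaceIndex k (f.eigenspace μ))
  refine ⟨_, B.reindex e, fun i ↦ (e.symm i).1, fun i ↦ ?_⟩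
  rw [Basis.reindex_apply, ← mem_eigenspace_iff]
  exact hint.collectedBasis_mem _ (e.symm i)

theorem LinearMap.Diagonalizable.isSemisimple [FiniteDimensional k W] (h : f.Diagonalizable) :
    f.IsSemisimple := by
  classical
  obtain ⟨ι, b, μ, hb⟩ := h
  have : Fintype ι := FiniteDimensional.fintypeBasisIndex b
  let S := Finset.univ.image μ
  refine isSemisimple_of_squarefree_aeval_eq_zero (p := ∏ c ∈ S, (X - C c))
    (separable_prod_X_sub_C_iff'.mpr fun _ _ _ _ h ↦ h).squarefree (b.ext fun i ↦ ?_)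
  have hroot : (∏ c ∈ S, (X - C c)).eval (μ i) = 0 := by
    rw [eval_prod]
    exact Finset.prod_eq_zero (Finset.mem_image_of_mem μ (Finset.mem_univ i)) (by simp)
  rw [aeval_apply_of_hasEigenvector ⟨mem_eigenspace_iff.mpr (hb i), b.ne_zero i⟩, hroot,
    zero_smul, LinearMap.zero_apply]

theorem Module.End.IsSemisimple.diagonalizable [IsAlgClosed k] [FiniteDimensional k W]
    (h : f.IsSemisimple) : f.Diagonalizable :=
  LinearMap.diagonalizable_of_iSup_eigenspace_eq_top h.iSup_eigenspace_eq_top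

end Diagonalizable

theorem Module.End.IsSemisimple.of_injective_of_comp_eq {R M N : Type*} [CommRing R]
    [AddCommGroup M] [Module R M] [AddCommGroup N] [Module R N] {f : End R M} {g : End R N}
    {j : N →ₗ[R] M} (hj : Function.Injective j) (hc : f ∘ₗ j = j ∘ₗ g) (hf : f.IsSemisimple) :
    g.IsSemisimple := by
  have hinv : LinearMap.range j ∈ f.invtSubmodule := by
    rintro _ ⟨x, rfl⟩
    exact ⟨g x, (LinearMap.congr_fun hc x).symm⟩
  refine (LinearEquiv.isSemisimple_iff g (f.restrict hinv) (LinearEquiv.ofInjective j hj) ?_).mpr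
    (hf.restrict hinv)
  ext x
  exact (LinearMap.congr_fun hc x).symm

section KroneckerSum

variable {k V W : Type*} [Field k] [AddCommGroup V] [Module k V] [AddCommGroup W] [Module k W]

theorem TensorProduct.mk_flip_injective {w : W} (hw : w ≠ 0) :
    Function.Injective ((TensorProduct.mk k V W).flip w) := by
  have hfactor : (TensorProduct.mk k V W).flip w =
      (LinearMap.toSpanSingleton k W w).lTensor V ∘ₗ (TensorProduct.rid k V).symm := by
    ext x
    simp
  rw [hfactor]
  exact (Module.Flat.lTensor_preserves_injective_linearMap _ (smul_left_injective k hw)).comp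
    (TensorProduct.rid k V).symm.injective

def Module.End.kroneckerSum (f : End k V) (g : End k W) : End k (V ⊗[k] W) :=
  TensorProduct.map f LinearMap.id + TensorProduct.map LinearMap.id g

namespace Module.End

variable {f : End k V} {g : End k W}

@[simp]
theorem kroneckerSum_tmul (x : V) (y : W) :
    kroneckerSum f g (x ⊗ₜ y) = f x ⊗ₜ y + x ⊗ₜ g y := by
  simp [kroneckerSum]

theorem kroneckerSum_tmul_eq_smul {x : V} {y : W} {α β : k} (hx : f x = α • x)
    (hy : g y = β • y) : kroneckerSum f g (x ⊗ₜ y) = (α + β) • x ⊗ₜ[k] y := by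
  rw [kroneckerSum_tmul, hx, hy, add_smul, TensorProduct.smul_tmul', TensorProduct.tmul_smul]

theorem comm_comp_kroneckerSum :
    (TensorProduct.comm k V W : V ⊗[k] W →ₗ[k] W ⊗[k] V) ∘ₗ kroneckerSum f g =
      kroneckerSum g f ∘ₗ TensorProduct.comm k V W := by
  ext x y
  simp [add_comm]

theorem kroneckerSum_comp_flip_mk {w : W} {β : k} (hw : g w = β • w) :
    kroneckerSum f g ∘ₗ (TensorProduct.mk k V W).flip w =
      (TensorProduct.mk k V W).flip w ∘ₗ (f + algebraMap k (End k V) β) := by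
  ext x
  simp [hw]

theorem IsSemisimple.of_kroneckerSum_left (h : (kroneckerSum f g).IsSemisimple) {β : k}
    (hβ : g.HasEigenvalue β) : f.IsSemisimple := by
  obtain ⟨w, hw⟩ := hβ.exists_hasEigenvector
  have hshift : (f + algebraMap k (End k V) β).IsSemisimple :=
    h.of_injective_of_comp_eq (TensorProduct.mk_flip_injective hw.2)
      (kroneckerSum_comp_flip_mk hw.apply_eq_smul)
  simpa using isSemisimple_sub_algebraMap_iff (μ := β) |>.mpr hshift

theorem IsSemisimple.of_kroneckerSum_right (h : (kroneckerSum f g).IsSemisimple) {α : k}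
    (hα : f.HasEigenvalue α) : g.IsSemisimple :=
  (((TensorProduct.comm k V W).isSemisimple_iff _ _ comm_comp_kroneckerSum).mp h
    ).of_kroneckerSum_left hα

theorem hasEigenvalue_kroneckerSum {α β : k} (hα : f.HasEigenvalue α) (hβ : g.HasEigenvalue β) :
    (kroneckerSum f g).HasEigenvalue (α + β) := by
  obtain ⟨x, hx⟩ := hα.exists_hasEigenvector
  obtain ⟨y, hy⟩ := hβ.exists_hasEigenvector
  have hxy : x ⊗ₜ[k] y ≠ 0 := by
    simpa using (TensorProduct.mk_flip_injective (V := V) hy.2).ne hx.2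
  exact hasEigenvalue_of_hasEigenvector
    ⟨mem_eigenspace_iff.mpr (kroneckerSum_tmul_eq_smul hx.apply_eq_smul hy.apply_eq_smul), hxy⟩

theorem hasEigenvalue_kroneckerSum_iff (hf : f.Diagonalizable) (hg : g.Diagonalizable) {μ : k} :
    (kroneckerSum f g).HasEigenvalue μ ↔
      ∃ α β, f.HasEigenvalue α ∧ g.HasEigenvalue β ∧ μ = α + β := by
  refine ⟨fun hμ ↦ ?_, fun ⟨α, β, hα, hβ, hμ⟩ ↦ hμ ▸ hasEigenvalue_kroneckerSum hα hβ⟩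
  obtain ⟨ι₁, b₁, μ₁, hb₁⟩ := hf
  obtain ⟨ι₂, b₂, μ₂, hb₂⟩ := hg
  obtain ⟨⟨i, j⟩, hij⟩ := exists_eq_of_hasEigenvalue_of_basis (b₁.tensorProduct b₂)
    (μ := fun ij ↦ μ₁ ij.1 + μ₂ ij.2)
    (fun ⟨i, j⟩ ↦ by
      rw [Basis.tensorProduct_apply]
      exact kroneckerSum_tmul_eq_smul (hb₁ i) (hb₂ j)) hμ
  exact ⟨μ₁ i, μ₂ j,
    hasEigenvalue_of_hasEigenvector ⟨mem_eigenspace_iff.mpr (hb₁ i), b₁.ne_zero i⟩,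
    hasEigenvalue_of_hasEigenvector ⟨mem_eigenspace_iff.mpr (hb₂ j), b₂.ne_zero j⟩, hij.symm⟩

end Module.End

end KroneckerSum

theorem stmt13_general (k : Type*) [Field k] [IsAlgClosed k]
    (W₁ W₂ : Type*) [AddCommGroup W₁] [AddCommGroup W₂] [Module k W₁] [Module k W₂]
    [FiniteDimensional k W₁] [FiniteDimensional k W₂] [Nontrivial W₁] [Nontrivial W₂]
    (Θ₁ : W₁ →ₗ[k] W₁) (Θ₂ : W₂ →ₗ[k] W₂)
    (hdiag : LinearMap.Diagonalizable
      (TensorProduct.map Θ₁ LinearMap.id + TensorProduct.map LinearMap.id Θ₂)) :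
    LinearMap.Diagonalizable Θ₁ ∧ LinearMap.Diagonalizable Θ₂ ∧
    (∀ μ : k,
      Module.End.HasEigenvalue
          (TensorProduct.map Θ₁ LinearMap.id + TensorProduct.map LinearMap.id Θ₂) μ ↔
        ∃ α β : k, Module.End.HasEigenvalue Θ₁ α ∧ Module.End.HasEigenvalue Θ₂ β ∧
          μ = α + β) ∧
    ((∀ μ : k, Module.End.HasEigenvalue
          (TensorProduct.map Θ₁ LinearMap.id + TensorProduct.map LinearMap.id Θ₂) μ →
          ∃ n : ℤ, μ = (n : k)) →
      (∀ β : k, Module.End.HasEigenvalue Θ₂ β → β = 0) →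
      ∀ α : k, Module.End.HasEigenvalue Θ₁ α → ∃ n : ℤ, α = (n : k)) := by
  have hss : (kroneckerSum Θ₁ Θ₂).IsSemisimple := hdiag.isSemisimple
  obtain ⟨α₀, hα₀⟩ := exists_eigenvalue Θ₁
  obtain ⟨β₀, hβ₀⟩ := exists_eigenvalue Θ₂
  have hdiag₁ := (hss.of_kroneckerSum_left hβ₀).diagonalizable
  have hdiag₂ := (hss.of_kroneckerSum_right hα₀).diagonalizable
  refine ⟨hdiag₁, hdiag₂, fun μ ↦ hasEigenvalue_kroneckerSum_iff hdiag₁ hdiag₂, ?_⟩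
  intro hint hzero α hα
  obtain ⟨n, hn⟩ := hint _ (hasEigenvalue_kroneckerSum hα hβ₀)
  exact ⟨n, by rwa [hzero β₀ hβ₀, add_zero] at hn⟩

/-- Over an algebraically closed field `k` of characteristic `0`, if the Kronecker
sum `Θ = Θ₁ ⊗ id + id ⊗ Θ₂` on `W₁ ⊗ W₂` (with `W₁, W₂` nonzero finite-dimensional) is
diagonalizable, then both `Θ₁` and `Θ₂` are diagonalizable; moreover the eigenvalues of `Θ` are
exactly the sums `α + β` of eigenvalues of `Θ₁` and `Θ₂`, so if all eigenvalues of `Θ` are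
integers and all eigenvalues of `Θ₂` are `0`, then all eigenvalues of `Θ₁` are integers. -/
theorem stmt13 (k : Type*) [Field k] [IsAlgClosed k] [CharZero k]
    (W₁ W₂ : Type*) [AddCommGroup W₁] [AddCommGroup W₂] [Module k W₁] [Module k W₂]
    [FiniteDimensional k W₁] [FiniteDimensional k W₂] [Nontrivial W₁] [Nontrivial W₂]
    (Θ₁ : W₁ →ₗ[k] W₁) (Θ₂ : W₂ →ₗ[k] W₂)
    (hdiag : LinearMap.Diagonalizable
      (TensorProduct.map Θ₁ LinearMap.id + TensorProduct.map LinearMap.id Θ₂)) :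
    LinearMap.Diagonalizable Θ₁ ∧ LinearMap.Diagonalizable Θ₂ ∧
    (∀ μ : k,
      Module.End.HasEigenvalue
          (TensorProduct.map Θ₁ LinearMap.id + TensorProduct.map LinearMap.id Θ₂) μ ↔
        ∃ α β : k, Module.End.HasEigenvalue Θ₁ α ∧ Module.End.HasEigenvalue Θ₂ β ∧
          μ = α + β) ∧
    ((∀ μ : k, Module.End.HasEigenvalue
          (TensorProduct.map Θ₁ LinearMap.id + TensorProduct.map LinearMap.id Θ₂) μ →
          ∃ n : ℤ, μ = (n : k)) →
      (∀ β : k, Module.End.HasEigenvalue Θ₂ β → β = 0) →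
      ∀ α : k, Module.End.HasEigenvalue Θ₁ α → ∃ n : ℤ, α = (n : k)) :=
  stmt13_general k W₁ W₂ Θ₁ Θ₂ hdiag
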